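/- arXiv:math/0211354 — 3 statements merged into one kernel-verified Lean document; each statement's English description precedes it below -/
import Mathlib

section
/- The Verlinde algebra V^{(k)} of level k, the free Z-module with basis [0],[1],...,[k] and product [l]·[l'] = Σ [l''] where the sum runs over l'' with |l−l'| ≤ l'' ≤ min(l+l', 2k−l−l') and l'' ≡ l+l' mod 2, is a commutative associative unital ring with unit [0]. -/
/-- Structure constant of the level-k Verlinde algebra: the multiplicity of [l'']
in [l]·[l'], namely 1 if |l−l'| ≤ l'' ≤ min(l+l', 2k−l−l') and l'' ≡ l+l' (mod 2),
and 0 otherwise. -/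
def verlindeCoeff (k l l' l'' : ℕ) : ℤ :=
  if (max l l' - min l l') ≤ l'' ∧ l'' ≤ min (l + l') (2 * k - (l + l')) ∧
      l'' % 2 = (l + l') % 2 then 1 else 0

/-- The bilinear multiplication on the free ℤ-module with basis [0],…,[k]. -/
noncomputable def verlindeMul (k : ℕ) (f g : Fin (k + 1) →₀ ℤ) : Fin (k + 1) →₀ ℤ :=
  ∑ l : Fin (k + 1), ∑ l' : Fin (k + 1), ∑ l'' : Fin (k + 1),
    (f l * g l' * verlindeCoeff k l.val l'.val l''.val) • Finsupp.single l'' (1 : ℤ)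

noncomputable def VM (k : ℕ) (a : ℕ) : Matrix (Fin (k+1)) (Fin (k+1)) ℤ :=
  Matrix.of fun b c => verlindeCoeff k a b.val c.val

lemma coeff_symm (k a b x : ℕ) : verlindeCoeff k a b x = verlindeCoeff k b a x := by
  unfold verlindeCoeff
  rw [max_comm, min_comm, Nat.add_comm]

lemma coeff_eq (k a b x : ℕ) (ha : a ≤ k) (hb : b ≤ k) :
    verlindeCoeff k a b x = if (a ≤ b + x ∧ b ≤ a + x ∧ x ≤ a + b ∧ a + b + x ≤ 2*k
      ∧ (a + b + x) % 2 = 0) then 1 else 0 := by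
  unfold verlindeCoeff
  split_ifs <;> omega

lemma VM_zero (k : ℕ) : VM k 0 = 1 := by
  ext b c
  simp only [VM, Matrix.of_apply, Matrix.one_apply, verlindeCoeff, Fin.ext_iff]
  have hb := b.isLt
  have hc := c.isLt
  split_ifs <;> omega

set_option maxHeartbeats 800000 in
lemma VM_rec (k j : ℕ) (hj : j + 2 ≤ k) :
    VM k 1 * VM k (j+1) = VM k j + VM k (j+2) := by
  ext b c
  rw [Matrix.mul_apply, Matrix.add_apply]
  have hb := b.isLt
  have hc := c.isLt
  have hsplit : ∀ m : Fin (k+1),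
      (VM k 1) b m = (if (m : ℕ) = b.val + 1 ∧ b.val + 1 ≤ k then 1 else 0)
        + (if (m : ℕ) = b.val - 1 ∧ 1 ≤ b.val then 1 else 0) := by
    intro m
    have hm := m.isLt
    simp only [VM, Matrix.of_apply, verlindeCoeff]
    split_ifs <;> omega
  calc ∑ m : Fin (k+1), (VM k 1) b m * (VM k (j+1)) m c
      = ∑ m : Fin (k+1),
          ((if (m : ℕ) = b.val + 1 ∧ b.val + 1 ≤ k then (VM k (j+1)) m c else 0)
          + (if (m : ℕ) = b.val - 1 ∧ 1 ≤ b.val then (VM k (j+1)) m c else 0)) := by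
        refine Finset.sum_congr rfl fun m _ => ?_
        rw [hsplit m]
        split_ifs <;> ring
    _ = (if b.val + 1 ≤ k then verlindeCoeff k (j+1) (b.val+1) c.val else 0)
        + (if 1 ≤ b.val then verlindeCoeff k (j+1) (b.val-1) c.val else 0) := by
        rw [Finset.sum_add_distrib]
        congr 1
        · by_cases h : b.val + 1 ≤ k
          · simp only [h, and_true, if_pos]
            rw [Finset.sum_eq_single (⟨b.val+1, by omega⟩ : Fin (k+1))]
            · simp [VM]
            · intro m _ hm
              rw [if_neg]
              exact fun hc' => hm (Fin.ext hc')
            · simp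
          · simp [h]
        · by_cases h : 1 ≤ b.val
          · simp only [h, and_true, if_pos]
            rw [Finset.sum_eq_single (⟨b.val-1, by omega⟩ : Fin (k+1))]
            · simp [VM]
            · intro m _ hm
              rw [if_neg]
              exact fun hc' => hm (Fin.ext hc')
            · simp
          · simp [h]
    _ = (VM k j) b c + (VM k (j+2)) b c := by
        simp only [VM, Matrix.of_apply]
        rw [coeff_eq k j b.val c.val (by omega) (by omega),
            coeff_eq k (j+2) b.val c.val (by omega) (by omega)]
        by_cases h1 : b.val + 1 ≤ k <;> by_cases h2 : 1 ≤ b.val <;>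
          simp only [h1, h2, if_true, if_false]
        all_goals first
          | rw [coeff_eq k (j+1) (b.val+1) c.val (by omega) (by omega),
                coeff_eq k (j+1) (b.val-1) c.val (by omega) (by omega)]
          | rw [coeff_eq k (j+1) (b.val+1) c.val (by omega) (by omega)]
          | rw [coeff_eq k (j+1) (b.val-1) c.val (by omega) (by omega)]
          | skip
        all_goals split_ifs <;> omega

lemma VM_comm_one (k : ℕ) : ∀ b, b ≤ k → Commute (VM k 1) (VM k b) := by
  intro b
  induction b using Nat.strong_induction_on with
  | _ b ih =>
    intro hb
    match b with
    | 0 => rw [VM_zero]; exact Commute.one_right _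
    | 1 => exact Commute.refl _
    | (j+2) =>
      have h1 : VM k (j+2) = VM k 1 * VM k (j+1) - VM k j := by
        rw [VM_rec k j hb, add_sub_cancel_left]
      rw [h1]
      exact (((Commute.refl (VM k 1)).mul_right
        (ih (j+1) (by omega) (by omega))).sub_right (ih j (by omega) (by omega)))

lemma VM_comm (k : ℕ) : ∀ a, a ≤ k → ∀ b, b ≤ k → Commute (VM k a) (VM k b) := by
  intro a
  induction a using Nat.strong_induction_on with
  | _ a ih =>
    intro ha b hb
    match a with
    | 0 => rw [VM_zero]; exact Commute.one_left _
    | 1 => exact VM_comm_one k b hb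
    | (j+2) =>
      have h1 : VM k (j+2) = VM k 1 * VM k (j+1) - VM k j := by
        rw [VM_rec k j ha, add_sub_cancel_left]
      rw [h1]
      exact (((VM_comm_one k b hb).mul_left
        (ih (j+1) (by omega) (by omega) b hb)).sub_left (ih j (by omega) (by omega) b hb))

lemma key (k : ℕ) (l l' l'' n : Fin (k+1)) :
    ∑ m : Fin (k+1), verlindeCoeff k l.val l'.val m.val * verlindeCoeff k m.val l''.val n.val
    = ∑ m : Fin (k+1), verlindeCoeff k l'.val l''.val m.val * verlindeCoeff k l.val m.val n.val := by
  have h := (VM_comm k l.val (by omega) l''.val (by omega)).eq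
  have h2 := congrArg (fun M => M l' n) h
  simp only [Matrix.mul_apply, VM, Matrix.of_apply] at h2
  calc ∑ m : Fin (k+1), verlindeCoeff k l.val l'.val m.val * verlindeCoeff k m.val l''.val n.val
      = ∑ m : Fin (k+1), verlindeCoeff k l.val l'.val m.val * verlindeCoeff k l''.val m.val n.val := by
        refine Finset.sum_congr rfl fun m _ => by rw [coeff_symm k m.val l''.val]
    _ = ∑ m : Fin (k+1), verlindeCoeff k l''.val l'.val m.val * verlindeCoeff k l.val m.val n.val := h2
    _ = _ := by
        refine Finset.sum_congr rfl fun m _ => by rw [coeff_symm k l''.val l'.val]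


lemma verlindeMul_apply (k : ℕ) (f g : Fin (k + 1) →₀ ℤ) (n : Fin (k+1)) :
    verlindeMul k f g n = ∑ l : Fin (k+1), ∑ l' : Fin (k+1),
      f l * g l' * verlindeCoeff k l.val l'.val n.val := by
  unfold verlindeMul
  rw [Finsupp.finset_sum_apply]
  refine Finset.sum_congr rfl fun l _ => ?_
  rw [Finsupp.finset_sum_apply]
  refine Finset.sum_congr rfl fun l' _ => ?_
  rw [Finsupp.finset_sum_apply]
  simp only [Finsupp.smul_apply, Finsupp.single_apply, smul_eq_mul]
  rw [Finset.sum_eq_single n]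
  · simp
  · intro m _ hm
    simp [hm]
  · simp

lemma verlinde_comm (k : ℕ) (f g : Fin (k + 1) →₀ ℤ) :
    verlindeMul k f g = verlindeMul k g f := by
  ext n
  rw [verlindeMul_apply, verlindeMul_apply, Finset.sum_comm]
  refine Finset.sum_congr rfl fun l' _ => Finset.sum_congr rfl fun l _ => ?_
  rw [coeff_symm]; ring

lemma sum4 {α : Type*} [Fintype α] (F : α → α → α → α → ℤ) :
    (∑ a : α, ∑ b : α, ∑ l : α, ∑ l' : α, F a b l l')
      = ∑ l : α, ∑ l' : α, ∑ b : α, ∑ a : α, F a b l l' := by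
  rw [Finset.sum_comm]
  rw [show (∑ b : α, ∑ a : α, ∑ l : α, ∑ l' : α, F a b l l')
      = ∑ b : α, ∑ l : α, ∑ l' : α, ∑ a : α, F a b l l' from
    Finset.sum_congr rfl fun b _ => by
      rw [Finset.sum_comm]
      exact Finset.sum_congr rfl fun l _ => Finset.sum_comm]
  rw [Finset.sum_comm]
  exact Finset.sum_congr rfl fun l _ => Finset.sum_comm

lemma verlinde_one_mul (k : ℕ) (f : Fin (k + 1) →₀ ℤ) :
    verlindeMul k (Finsupp.single 0 1) f = f := by
  ext n
  rw [verlindeMul_apply]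
  rw [Finset.sum_eq_single (0 : Fin (k+1))]
  · have hco : ∀ l' : Fin (k+1), verlindeCoeff k (0:ℕ) l'.val n.val
        = if l'.val = n.val then 1 else 0 := by
      intro l'
      have h1 := l'.isLt
      have h2 := n.isLt
      rw [coeff_eq k 0 l'.val n.val (by omega) (by omega)]
      split_ifs <;> omega
    simp only [Fin.val_zero, hco]
    rw [Finset.sum_eq_single n]
    · simp
    · intro m _ hm
      rw [if_neg (fun h => hm (Fin.ext h))]; ring
    · simp
  · intro l _ hl
    have hz : (Finsupp.single (0 : Fin (k+1)) (1:ℤ)) l = 0 := by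
      rw [Finsupp.single_apply, if_neg (by exact fun h => hl h.symm)]
    rw [hz]
    exact Finset.sum_eq_zero fun l' _ => by ring
  · simp

lemma verlinde_assoc (k : ℕ) (f g h : Fin (k + 1) →₀ ℤ) :
    verlindeMul k (verlindeMul k f g) h = verlindeMul k f (verlindeMul k g h) := by
  ext n
  rw [verlindeMul_apply, verlindeMul_apply]
  calc ∑ a : Fin (k+1), ∑ b : Fin (k+1),
        (verlindeMul k f g) a * h b * verlindeCoeff k a.val b.val n.val
      = ∑ a : Fin (k+1), ∑ b : Fin (k+1), ∑ l : Fin (k+1), ∑ l' : Fin (k+1),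
          f l * g l' * h b * (verlindeCoeff k l.val l'.val a.val
            * verlindeCoeff k a.val b.val n.val) := by
        refine Finset.sum_congr rfl fun a _ => Finset.sum_congr rfl fun b _ => ?_
        rw [verlindeMul_apply, Finset.sum_mul, Finset.sum_mul]
        refine Finset.sum_congr rfl fun l _ => ?_
        rw [Finset.sum_mul, Finset.sum_mul]
        refine Finset.sum_congr rfl fun l' _ => by ring
    _ = ∑ l : Fin (k+1), ∑ l' : Fin (k+1), ∑ b : Fin (k+1), ∑ a : Fin (k+1),
          f l * g l' * h b * (verlindeCoeff k l.val l'.val a.val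
            * verlindeCoeff k a.val b.val n.val) := sum4 _
    _ = ∑ l : Fin (k+1), ∑ l' : Fin (k+1), ∑ b : Fin (k+1), ∑ m : Fin (k+1),
          f l * g l' * h b * (verlindeCoeff k l'.val b.val m.val
            * verlindeCoeff k l.val m.val n.val) := by
        refine Finset.sum_congr rfl fun l _ => Finset.sum_congr rfl fun l' _ =>
          Finset.sum_congr rfl fun b _ => ?_
        rw [← Finset.mul_sum, ← Finset.mul_sum, key k l l' b n]
    _ = ∑ l : Fin (k+1), ∑ m : Fin (k+1),
          f l * (verlindeMul k g h) m * verlindeCoeff k l.val m.val n.val := by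
        refine Finset.sum_congr rfl fun l _ => ?_
        rw [show (∑ l' : Fin (k+1), ∑ b : Fin (k+1), ∑ m : Fin (k+1),
            f l * g l' * h b * (verlindeCoeff k l'.val b.val m.val
              * verlindeCoeff k l.val m.val n.val))
          = ∑ m : Fin (k+1), ∑ l' : Fin (k+1), ∑ b : Fin (k+1),
            f l * g l' * h b * (verlindeCoeff k l'.val b.val m.val
              * verlindeCoeff k l.val m.val n.val) from by
          rw [show (∑ l' : Fin (k+1), ∑ b : Fin (k+1), ∑ m : Fin (k+1),
              f l * g l' * h b * (verlindeCoeff k l'.val b.val m.val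
                * verlindeCoeff k l.val m.val n.val))
            = ∑ l' : Fin (k+1), ∑ m : Fin (k+1), ∑ b : Fin (k+1),
              f l * g l' * h b * (verlindeCoeff k l'.val b.val m.val
                * verlindeCoeff k l.val m.val n.val) from
            Finset.sum_congr rfl fun l' _ => Finset.sum_comm]
          exact Finset.sum_comm]
        refine Finset.sum_congr rfl fun m _ => ?_
        rw [verlindeMul_apply]
        conv_rhs => rw [Finset.mul_sum, Finset.sum_mul]
        refine Finset.sum_congr rfl fun l' _ => ?_
        conv_rhs => rw [Finset.mul_sum, Finset.sum_mul]
        refine Finset.sum_congr rfl fun b _ => by ring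

/-- the Verlinde algebra V^{(k)} is a commutative associative unital
ring, with unit the basis element [0]. -/
theorem verlinde_comm_assoc_unital (k : ℕ) :
    (∀ f g : Fin (k + 1) →₀ ℤ, verlindeMul k f g = verlindeMul k g f) ∧
    (∀ f g h : Fin (k + 1) →₀ ℤ,
      verlindeMul k (verlindeMul k f g) h = verlindeMul k f (verlindeMul k g h)) ∧
    (∀ f : Fin (k + 1) →₀ ℤ,
      verlindeMul k (Finsupp.single 0 1) f = f ∧
      verlindeMul k f (Finsupp.single 0 1) = f) := by
  exact ⟨verlinde_comm k, verlinde_assoc k,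
    fun f => ⟨verlinde_one_mul k f,
      (verlinde_comm k f (Finsupp.single 0 1)).trans (verlinde_one_mul k f)⟩⟩
end

section
/- Let v be a vector in a representation of o_5 annihilated by X̄, Ȳ, Z̄, T̄ and by T, where T = √2(e_{23}−e_{34}) acts. Then for all m ≥ 0: T (Z^m/m!) v = −2 Y (Z^{m−1}/(m−1)!) v and X̄ (Z^m/m!) v = Y (Z^{m−2}/(m−2)!) v (with the convention that Z^m/m! = 0 for m < 0), where X = e_{12}−e_{45}, Y = e_{14}−e_{25}, Z = √2(−e_{13}+e_{35}), X̄, Ȳ, Z̄, T̄ are the corresponding negative root vectors. -/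
open Matrix

/-- Matrix units e_{ab} for 5×5 complex matrices (0-based indices). -/
noncomputable def E5 (a b : Fin 5) : Matrix (Fin 5) (Fin 5) ℂ :=
  Matrix.single a b 1

/-- Membership in o_5: the condition c_{ab} + c_{6−b,6−a} = 0 (written with
0-based indices as c_{ab} + c_{4−b,4−a} = 0). -/
def memO5 (c : Matrix (Fin 5) (Fin 5) ℂ) : Prop :=
  ∀ a b : Fin 5, c a b + c (4 - b) (4 - a) = 0

/-- X = e_{12} − e_{45}. -/
noncomputable def Xo5 : Matrix (Fin 5) (Fin 5) ℂ := E5 0 1 - E5 3 4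
/-- X̄ = e_{21} − e_{54}. -/
noncomputable def Xbo5 : Matrix (Fin 5) (Fin 5) ℂ := E5 1 0 - E5 4 3
/-- Y = e_{14} − e_{25}. -/
noncomputable def Yo5 : Matrix (Fin 5) (Fin 5) ℂ := E5 0 3 - E5 1 4
/-- Ȳ = e_{41} − e_{52}. -/
noncomputable def Ybo5 : Matrix (Fin 5) (Fin 5) ℂ := E5 3 0 - E5 4 1
/-- Z = √2(−e_{13} + e_{35}). -/
noncomputable def Zo5 : Matrix (Fin 5) (Fin 5) ℂ :=
  (Real.sqrt 2 : ℂ) • (-(E5 0 2) + E5 2 4)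
/-- Z̄ = √2(−e_{31} + e_{53}). -/
noncomputable def Zbo5 : Matrix (Fin 5) (Fin 5) ℂ :=
  (Real.sqrt 2 : ℂ) • (-(E5 2 0) + E5 4 2)
/-- T = √2(e_{23} − e_{34}). -/
noncomputable def To5 : Matrix (Fin 5) (Fin 5) ℂ :=
  (Real.sqrt 2 : ℂ) • (E5 1 2 - E5 2 3)
/-- T̄ = √2(e_{32} − e_{43}). -/
noncomputable def Tbo5 : Matrix (Fin 5) (Fin 5) ℂ :=
  (Real.sqrt 2 : ℂ) • (E5 2 1 - E5 3 2)

/-- The divided power Z^m/m! applied to v, with the convention that it is 0 for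
m < 0. -/
noncomputable def dividedZ {V : Type*} [AddCommGroup V] [Module ℂ V]
    (ρ : Matrix (Fin 5) (Fin 5) ℂ →ₗ[ℂ] Module.End ℂ V) (v : V) (m : ℤ) : V :=
  if m < 0 then 0
  else ((Nat.factorial m.toNat : ℂ))⁻¹ • ((ρ Zo5) ^ m.toNat) v

/-!
With `d m = Z^m v / m!` (and `d m = 0` for `m < 0`) one has `Z (d m) = (m + 1) d (m + 1)` for
every integer `m`. Commuting `T` past `Z` costs `[T, Z] = -2Y`, and `Y` commutes with `Z`, so
from `T v = 0` an induction on `m` gives `T (d m) = -2 Y (d (m - 1))`. Commuting `X̄` past `Z`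
costs `[X̄, Z] = -T`, which feeds the first relation into the second induction; the coefficient
`1` of `Y (d (m - 2))` is the one solving `(m + 1) a = (m - 1) a + 2`.
-/

section DividedPowers

variable {K V : Type*} [Field K] [AddCommGroup V] [Module K V]

theorem Module.End.apply_apply_of_lie_eq {a b c : Module.End K V} (h : ⁅a, b⁆ = c) (w : V) :
    a (b w) = b (a w) + c w := by
  rw [← h, Ring.lie_def, LinearMap.sub_apply, Module.End.mul_apply, Module.End.mul_apply,
    add_sub_cancel]

noncomputable def dividedPowApply (z : Module.End K V) (v : V) (m : ℤ) : V :=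
  if m < 0 then 0 else ((m.toNat.factorial : K))⁻¹ • (z ^ m.toNat) v

variable {z : Module.End K V} {v : V}

theorem dividedPowApply_of_neg {m : ℤ} (hm : m < 0) : dividedPowApply z v m = 0 :=
  if_pos hm

theorem dividedPowApply_natCast (n : ℕ) :
    dividedPowApply z v n = ((n.factorial : K))⁻¹ • (z ^ n) v := by
  simp [dividedPowApply]

theorem dividedPowApply_zero : dividedPowApply z v 0 = v := by
  simpa using dividedPowApply_natCast (z := z) (v := v) 0

variable [CharZero K]

theorem apply_dividedPowApply (m : ℤ) :
    z (dividedPowApply z v m) = ((m + 1 : ℤ) : K) • dividedPowApply z v (m + 1) := by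
  rcases lt_or_ge m 0 with hm | hm
  · rw [dividedPowApply_of_neg hm, map_zero]
    rcases (by omega : m + 1 < 0 ∨ m + 1 = 0) with h | h
    · rw [dividedPowApply_of_neg h, smul_zero]
    · rw [h, Int.cast_zero, zero_smul]
  lift m to ℕ using hm with n
  have hn : (n + 1 : K) ≠ 0 := Nat.cast_add_one_ne_zero n
  rw [← Nat.cast_succ, dividedPowApply_natCast, dividedPowApply_natCast, map_smul,
    ← Module.End.mul_apply, ← pow_succ', Nat.factorial_succ, smul_smul]
  push_cast
  field_simp

theorem apply_dividedPowApply_of_lie_eq_smul {t y : Module.End K V} {c : K}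
    (htz : ⁅t, z⁆ = c • y) (hyz : Commute y z) (ht : t v = 0) (m : ℤ) :
    t (dividedPowApply z v m) = c • y (dividedPowApply z v (m - 1)) := by
  rcases lt_or_ge m 0 with hm | hm
  · rw [dividedPowApply_of_neg hm, dividedPowApply_of_neg (by omega), map_zero, map_zero,
      smul_zero]
  induction m, hm using Int.leInduction with
  | base => rw [dividedPowApply_zero, ht, dividedPowApply_of_neg (by omega), map_zero, smul_zero]
  | succ k hk ih =>
    refine smul_right_injective V (r := ((k + 1 : ℤ) : K)) (by exact_mod_cast (by omega)) ?_
    calc ((k + 1 : ℤ) : K) • t (dividedPowApply z v (k + 1))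
        = t (z (dividedPowApply z v k)) := by rw [apply_dividedPowApply, map_smul]
      _ = z (t (dividedPowApply z v k)) + c • y (dividedPowApply z v k) :=
          Module.End.apply_apply_of_lie_eq htz _
      _ = c • y (z (dividedPowApply z v (k - 1))) + c • y (dividedPowApply z v k) := by
          rw [ih, map_smul, ← Module.End.mul_apply, ← hyz.eq, Module.End.mul_apply]
      _ = ((k + 1 : ℤ) : K) • c • y (dividedPowApply z v (k + 1 - 1)) := by
          rw [apply_dividedPowApply, sub_add_cancel, add_sub_cancel_right, map_smul]
          push_cast
          module

theorem apply_dividedPowApply_of_lie_eq_smul_of_lie_eq_smul {x t y : Module.End K V} {c e : K}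
    (hxz : ⁅x, z⁆ = e • t) (htz : ⁅t, z⁆ = c • y) (hyz : Commute y z) (hx : x v = 0)
    (ht : t v = 0) (m : ℤ) :
    x (dividedPowApply z v m) = (e * c / 2) • y (dividedPowApply z v (m - 2)) := by
  rcases lt_or_ge m 0 with hm | hm
  · rw [dividedPowApply_of_neg hm, dividedPowApply_of_neg (by omega), map_zero, map_zero,
      smul_zero]
  induction m, hm using Int.leInduction with
  | base => rw [dividedPowApply_zero, hx, dividedPowApply_of_neg (by omega), map_zero, smul_zero]
  | succ k hk ih =>
    refine smul_right_injective V (r := ((k + 1 : ℤ) : K)) (by exact_mod_cast (by omega)) ?_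
    calc ((k + 1 : ℤ) : K) • x (dividedPowApply z v (k + 1))
        = x (z (dividedPowApply z v k)) := by rw [apply_dividedPowApply, map_smul]
      _ = z (x (dividedPowApply z v k)) + e • t (dividedPowApply z v k) :=
          Module.End.apply_apply_of_lie_eq hxz _
      _ = (e * c / 2) • y (z (dividedPowApply z v (k - 2)))
            + e • c • y (dividedPowApply z v (k - 1)) := by
          rw [ih, apply_dividedPowApply_of_lie_eq_smul htz hyz ht, map_smul,
            ← Module.End.mul_apply, ← hyz.eq, Module.End.mul_apply]
      _ = ((k + 1 : ℤ) : K) • (e * c / 2) • y (dividedPowApply z v (k + 1 - 2)) := by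
          rw [apply_dividedPowApply, show k - 2 + 1 = k + 1 - 2 by ring,
            show k - 1 = k + 1 - 2 by ring, map_smul]
          push_cast
          module

end DividedPowers

theorem ofReal_sqrt_two_mul_self : ((Real.sqrt 2 : ℝ) : ℂ) * ((Real.sqrt 2 : ℝ) : ℂ) = 2 := by
  norm_cast
  exact Real.mul_self_sqrt zero_le_two

theorem E5_mul_E5 (a b c d : Fin 5) : E5 a b * E5 c d = if b = c then E5 a d else 0 := by
  split_ifs with h
  · rw [h, E5, E5, E5, Matrix.single_mul_single_same, mul_one]
  · exact Matrix.single_mul_single_of_ne 1 a b c h 1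

theorem lie_To5_Zo5 : ⁅To5, Zo5⁆ = (-2 : ℂ) • Yo5 := by
  simp only [To5, Zo5, Yo5, Ring.lie_def, smul_mul_smul_comm, ofReal_sqrt_two_mul_self,
    sub_mul, mul_sub, add_mul, mul_add, neg_mul, mul_neg, E5_mul_E5, Fin.reduceEq, ↓reduceIte]
  module

theorem lie_Xbo5_Zo5 : ⁅Xbo5, Zo5⁆ = -To5 := by
  simp only [Xbo5, Zo5, To5, Ring.lie_def, Matrix.mul_smul, Matrix.smul_mul,
    sub_mul, mul_sub, add_mul, mul_add, neg_mul, mul_neg, E5_mul_E5, Fin.reduceEq, ↓reduceIte]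
  module

theorem lie_Yo5_Zo5 : ⁅Yo5, Zo5⁆ = 0 := by
  simp only [Yo5, Zo5, Ring.lie_def, Matrix.mul_smul, Matrix.smul_mul,
    sub_mul, mul_sub, add_mul, mul_add, neg_mul, mul_neg, E5_mul_E5, Fin.reduceEq, ↓reduceIte]
  module

theorem memO5_To5 : memO5 To5 := by
  intro a b
  fin_cases a <;> fin_cases b <;> simp [To5, E5, Matrix.single]

theorem memO5_Zo5 : memO5 Zo5 := by
  intro a b
  fin_cases a <;> fin_cases b <;> simp [Zo5, E5, Matrix.single]

theorem memO5_Yo5 : memO5 Yo5 := by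
  intro a b
  fin_cases a <;> fin_cases b <;> simp [Yo5, E5, Matrix.single]

theorem memO5_Xbo5 : memO5 Xbo5 := by
  intro a b
  fin_cases a <;> fin_cases b <;> simp [Xbo5, E5, Matrix.single]

theorem divided_power_relations_general {V : Type*} [AddCommGroup V] [Module ℂ V]
    (ρ : Matrix (Fin 5) (Fin 5) ℂ →ₗ[ℂ] Module.End ℂ V)
    (hρ : ∀ c d : Matrix (Fin 5) (Fin 5) ℂ, memO5 c → memO5 d →
      ρ ⁅c, d⁆ = ⁅ρ c, ρ d⁆)
    (v : V)
    (hXb : ρ Xbo5 v = 0) (hT : ρ To5 v = 0) :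
    ∀ m : ℤ, 0 ≤ m →
      ρ To5 (dividedZ ρ v m) = (-2 : ℂ) • ρ Yo5 (dividedZ ρ v (m - 1)) ∧
      ρ Xbo5 (dividedZ ρ v m) = ρ Yo5 (dividedZ ρ v (m - 2)) := by
  have hTZ : ⁅ρ To5, ρ Zo5⁆ = (-2 : ℂ) • ρ Yo5 := by
    rw [← hρ _ _ memO5_To5 memO5_Zo5, lie_To5_Zo5, map_smul]
  have hXbZ : ⁅ρ Xbo5, ρ Zo5⁆ = (-1 : ℂ) • ρ To5 := by
    rw [← hρ _ _ memO5_Xbo5 memO5_Zo5, lie_Xbo5_Zo5, map_neg, neg_one_smul]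
  have hYZ : Commute (ρ Yo5) (ρ Zo5) := by
    rw [commute_iff_lie_eq, ← hρ _ _ memO5_Yo5 memO5_Zo5, lie_Yo5_Zo5, map_zero]
  have hd : dividedZ ρ v = dividedPowApply (ρ Zo5) v := rfl
  intro m _
  rw [hd]
  refine ⟨apply_dividedPowApply_of_lie_eq_smul hTZ hYZ hT m, ?_⟩
  simpa using apply_dividedPowApply_of_lie_eq_smul_of_lie_eq_smul hXbZ hTZ hYZ hXb hT m

/-- for a representation ρ of o_5 and a vector v annihilated by
X̄, Ȳ, Z̄, T̄ and T, one has T(Z^m/m!)v = −2Y(Z^{m−1}/(m−1)!)v and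
X̄(Z^m/m!)v = Y(Z^{m−2}/(m−2)!)v for all m ≥ 0 (with Z^m/m! = 0 for m < 0). -/
theorem divided_power_relations {V : Type*} [AddCommGroup V] [Module ℂ V]
    (ρ : Matrix (Fin 5) (Fin 5) ℂ →ₗ[ℂ] Module.End ℂ V)
    (hρ : ∀ c d : Matrix (Fin 5) (Fin 5) ℂ, memO5 c → memO5 d →
      ρ ⁅c, d⁆ = ⁅ρ c, ρ d⁆)
    (v : V)
    (hXb : ρ Xbo5 v = 0) (hYb : ρ Ybo5 v = 0) (hZb : ρ Zbo5 v = 0)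
    (hTb : ρ Tbo5 v = 0) (hT : ρ To5 v = 0) :
    ∀ m : ℤ, 0 ≤ m →
      ρ To5 (dividedZ ρ v m) = (-2 : ℂ) • ρ Yo5 (dividedZ ρ v (m - 1)) ∧
      ρ Xbo5 (dividedZ ρ v m) = ρ Yo5 (dividedZ ρ v (m - 2)) :=
  divided_power_relations_general ρ hρ v hXb hT
end

section
/- Let x(z) = Σ_{i≥0} x_i z^i be a polynomial of degree ≤ N−1 with coefficients in an associative algebra, such that all coefficients x_i commute pairwise, and suppose there are distinct nonzero scalars ζ_1,...,ζ_N and nonnegative integers k_1,...,k_N with x(ζ_a^{-1})^{k_a+1} = 0 (as an algebra element) for each a. Then for every ν ≥ 0, the polynomial x(z)^ν is divisible by ∏_{a=1}^N (1 − ζ_a z)^{max(ν−k_a, 0)}, and x(z)^ν / ∏_{a=1}^N (1−ζ_a z)^{max(ν−k_a,0)} is a polynomial of degree at most Σ_{a=1}^N min(ν,k_a) − ν. -/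
open Polynomial

private lemma nilp_pow_dvd {S : Type*} [CommRing S] (d e : S) (k ν : ℕ)
    (he : e ^ (k + 1) = 0) : d ^ (ν - k) ∣ (d + e) ^ ν := by
  rw [add_pow]
  apply Finset.dvd_sum
  intro j hj
  by_cases h : ν - j ≤ k
  · exact Dvd.dvd.mul_right (Dvd.dvd.mul_right (pow_dvd_pow d (by
      simp only [Finset.mem_range] at hj; omega)) _) _
  · have hz : e ^ (ν - j) = 0 := by
      have : e ^ (ν - j) = e ^ (k + 1) * e ^ (ν - j - (k + 1)) := by
        rw [← pow_add]; congr 1; omega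
      rw [this, he, zero_mul]
    simp [hz]

private lemma X_sub_C_pow_dvd {R : Type*} [CommRing R] (x : Polynomial R) (c : R)
    (k ν : ℕ) (h : (x.eval c) ^ (k + 1) = 0) :
    (Polynomial.X - Polynomial.C c) ^ (ν - k) ∣ x ^ ν := by
  have hd : (X - C c) ∣ (x - C (x.eval c)) := X_sub_C_dvd_sub_C_eval
  have h2 : (x - C (x.eval c)) ^ (ν - k) ∣ ((x - C (x.eval c)) + C (x.eval c)) ^ ν :=
    nilp_pow_dvd _ _ k ν (by rw [← C_pow, h, C_0])
  have h3 := (pow_dvd_pow_of_dvd hd (ν - k)).trans h2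
  simpa using h3

/-- let x(z) be a polynomial of degree ≤ N−1 with commuting
coefficients, and suppose x(ζ_a^{-1})^{k_a+1} = 0 for distinct nonzero scalars
ζ_1,…,ζ_N.  Then for every ν ≥ 0, x(z)^ν is divisible by
∏_a (1 − ζ_a z)^{max(ν−k_a,0)}, and the quotient is a polynomial of degree at
most Σ_a min(ν,k_a) − ν. -/
theorem fused_nilpotency_degree_bound {K R : Type*} [Field K] [CommRing R]
    [Algebra K R] (N : ℕ) (ζ : Fin N → K) (hζ0 : ∀ a, ζ a ≠ 0)
    (hinj : Function.Injective ζ) (k : Fin N → ℕ)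
    (x : Polynomial R) (hdeg : x.degree < N)
    (hnil : ∀ a, (x.eval (algebraMap K R (ζ a)⁻¹)) ^ (k a + 1) = 0) :
    ∀ ν : ℕ, ∃ g : Polynomial R,
      x ^ ν =
        (∏ a : Fin N,
          (1 - Polynomial.C (algebraMap K R (ζ a)) * Polynomial.X) ^ (ν - k a)) * g ∧
      (g = 0 ∨ (g.natDegree : ℤ) ≤ (∑ a : Fin N, min ν (k a) : ℤ) - ν) := by
  intro ν
  set φ := algebraMap K R with hφ
  set c : Fin N → R := fun a => φ (ζ a)⁻¹ with hc
  set M : Polynomial R := ∏ a : Fin N, (X - C (c a)) ^ (ν - k a) with hM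
  by_cases hx0 : x ^ ν = 0
  · exact ⟨0, by rw [hx0, mul_zero], Or.inl rfl⟩
  -- M divides x^ν
  have hcop : Pairwise (Function.onFun IsCoprime fun a : Fin N => (X - C (c a)) ^ (ν - k a)) := by
    intro a b hab
    apply IsCoprime.pow
    apply isCoprime_X_sub_C_of_isUnit_sub
    have hcc : c a - c b = φ ((ζ a)⁻¹ - (ζ b)⁻¹) := by simp [hc, map_sub]
    rw [hcc]
    refine IsUnit.map φ ((sub_ne_zero_of_ne ?_).isUnit)
    intro h
    exact hab (hinj (by simpa [inv_inv] using congrArg Inv.inv h))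
  have hMdvd : M ∣ x ^ ν :=
    Fintype.prod_dvd_of_coprime hcop fun a => X_sub_C_pow_dvd x (c a) (k a) ν (hnil a)
  obtain ⟨q, hq⟩ := hMdvd
  have hMmonic : M.Monic :=
    monic_prod_of_monic _ _ fun a _ => (monic_X_sub_C (c a)).pow _
  have hq0 : q ≠ 0 := by rintro rfl; exact hx0 (by rw [hq, mul_zero])
  -- the required product equals C (φ s) * M for a unit scalar s
  set s : K := ∏ a : Fin N, (-(ζ a)) ^ (ν - k a) with hs
  have hs0 : s ≠ 0 :=
    Finset.prod_ne_zero_iff.mpr fun a _ => pow_ne_zero _ (neg_ne_zero.mpr (hζ0 a))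
  have hPM : (∏ a : Fin N, (1 - C (φ (ζ a)) * X) ^ (ν - k a)) = C (φ s) * M := by
    rw [hM, hs, map_prod, map_prod, ← Finset.prod_mul_distrib]
    refine Finset.prod_congr rfl fun a _ => ?_
    rw [map_pow, map_pow, ← mul_pow]
    congr 1
    have key : φ (ζ a) * c a = 1 := by
      rw [hc, ← map_mul, mul_inv_cancel₀ (hζ0 a), map_one]
    rw [map_neg, map_neg, neg_mul, mul_sub, ← C_mul, key, C_1]
    ring
  refine ⟨C (φ s⁻¹) * q, ?_, Or.inr ?_⟩
  · rw [hPM, hq, mul_mul_mul_comm, ← C_mul, ← map_mul, mul_inv_cancel₀ hs0, map_one,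
      C_1, one_mul]
  · -- degree bookkeeping
    have hnontriv : Nontrivial R := by
      rcases subsingleton_or_nontrivial R with hsub | h
      · exact absurd (Subsingleton.elim _ _) hx0
      · exact h
    have hdM : M.natDegree = ∑ a : Fin N, (ν - k a) := by
      rw [hM, natDegree_prod_of_monic _ _ fun a _ => (monic_X_sub_C (c a)).pow _]
      exact Finset.sum_congr rfl fun a _ => by
        rw [(monic_X_sub_C (c a)).natDegree_pow, natDegree_X_sub_C, mul_one]
    have hdx : (x ^ ν).natDegree = M.natDegree + q.natDegree := by
      rw [hq, natDegree_mul' ]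
      rw [hMmonic.leadingCoeff, one_mul]
      exact leadingCoeff_ne_zero.mpr hq0
    have hD2 : (x ^ ν).natDegree + ν ≤ ν * N := by
      rcases eq_or_ne x 0 with rfl | hxne
      · have hν0 : ν = 0 := by
          by_contra hν
          exact hx0 (zero_pow hν)
        subst hν0; simp
      · have hnd : x.natDegree + 1 ≤ N := by
          have : x.natDegree < N := (natDegree_lt_iff_degree_lt hxne).mpr hdeg
          omega
        calc (x ^ ν).natDegree + ν ≤ ν * x.natDegree + ν := by
              have := natDegree_pow_le (p := x) (n := ν); omega
          _ = ν * (x.natDegree + 1) := by ring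
          _ ≤ ν * N := Nat.mul_le_mul_left ν hnd
    have hgle : (C (φ s⁻¹) * q).natDegree ≤ q.natDegree := natDegree_C_mul_le _ _
    have hsum : (∑ a : Fin N, min ν (k a)) + (∑ a : Fin N, (ν - k a)) = ν * N := by
      rw [← Finset.sum_add_distrib,
        Finset.sum_congr rfl (fun a _ => (by omega : min ν (k a) + (ν - k a) = ν))]
      simp [mul_comm]
    have hfin : (C (φ s⁻¹) * q).natDegree + ν ≤ ∑ a : Fin N, min ν (k a) := by omega
    have hZ : (∑ a : Fin N, (min ν (k a) : ℤ)) = ((∑ a : Fin N, min ν (k a) : ℕ) : ℤ) := by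
      rw [Nat.cast_sum]
      exact Finset.sum_congr rfl fun a _ => (Nat.cast_min _ _).symm
    rw [hZ]
    omega
end
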